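/- Let Q := G Gᵀ be symmetric positive definite where G is a real m×n matrix, let Ω̂ be a symmetric positive semidefinite real p×p matrix, λ̂ ∈ ℝ^p, f ∈ ℝ^p, g, u⁺ ∈ ℝ^m, A a real p×p matrix, B a real m×p matrix, and F a real p×n matrix. Define L := I_n − Gᵀ Q⁻¹ G, f̄ := f + F Gᵀ Q⁻¹ (u⁺ − g), Ā := A − F Gᵀ Q⁻¹ B, M := L Fᵀ Ω̂ F L + I_n, Ψ := L M⁻¹ L, and ε := λ̂ − Ω̂ f̄. Then for every z ∈ ℝ^p: (det Q)^{−1/2} exp(−(1/2)(u⁺ − g − B z)ᵀ Q⁻¹ (u⁺ − g − B z)) · ∫_{ℝ^n} φ_n(ξ) exp(−(1/2)((f̄ + Ā z + F L ξ)ᵀ Ω̂ (f̄ + Ā z + F L ξ) − 2 λ̂ᵀ (f̄ + Ā z + F L ξ))) dξ = Z · exp(−(1/2)(zᵀ Ω z − 2 λᵀ z)), where Z = (det Q)^{−1/2} (det M)^{−1/2} exp(−τ/2), τ = (u⁺ − g)ᵀ Q⁻¹ (u⁺ − g) + f̄ᵀ Ω̂ f̄ − 2 λ̂ᵀ f̄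 − (Fᵀ ε)ᵀ Ψ (Fᵀ ε), Ω = Āᵀ (I_p − Ω̂ F Ψ Fᵀ) Ω̂ Ā + Bᵀ Q⁻¹ B, and λ = Āᵀ (I_p − Ω̂ F Ψ Fᵀ) ε + Bᵀ Q⁻¹ (u⁺ − g). -/

import Mathlib

/-!
Two completions of the square. In the noise `ξ` the exponent is a quadratic form with matrix
`M = (F L)ᵀ Ω̂ (F L) + 1`, positive definite because `Ω̂` is positive semidefinite, so the
multivariate Gaussian integral `∫ exp (-(1/2) ξᵀ M ξ + bᵀ ξ) = (2π)^{n/2} (det M)^{-1/2}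
exp ((1/2) bᵀ M⁻¹ b)` (substitute `ξ = M^{-1/2} x`) evaluates it. Since `L` is symmetric and
`b = L Fᵀ (λ̂ - Ω̂ (f̄ + Ā z))`, the term `bᵀ M⁻¹ b` is the `Ψ = L M⁻¹ L` form of
`Fᵀ (λ̂ - Ω̂ (f̄ + Ā z))`. Expanding every quadratic form in `z` and collecting the constant,
linear and quadratic terms gives `τ`, `λ` and `Ω`.
-/

open Matrix MeasureTheory Real

section QuadraticForms

variable {m n o R : Type*} [Fintype m] [Fintype n] [Fintype o]

theorem Matrix.mulVec_dotProduct_mulVec [CommSemiring R] (A : Matrix m n R) (B : Matrix m o R)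
    (x : n → R) (y : o → R) : A *ᵥ x ⬝ᵥ B *ᵥ y = x ⬝ᵥ (Aᵀ * B) *ᵥ y := by
  rw [← mulVec_mulVec, dotProduct_transpose_mulVec, dotProduct_comm]

theorem Matrix.IsSymm.dotProduct_mulVec_comm [CommSemiring R] {S : Matrix m m R}
    (hS : S.IsSymm) (x y : m → R) : x ⬝ᵥ S *ᵥ y = y ⬝ᵥ S *ᵥ x := by
  rw [← dotProduct_transpose_mulVec, hS.eq]

variable [CommRing R] {S : Matrix m m R}

theorem Matrix.IsSymm.add_dotProduct_mulVec_add (hS : S.IsSymm) (x y : m → R) :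
    (x + y) ⬝ᵥ S *ᵥ (x + y) = x ⬝ᵥ S *ᵥ x + 2 * (x ⬝ᵥ S *ᵥ y) + y ⬝ᵥ S *ᵥ y := by
  rw [mulVec_add, add_dotProduct, dotProduct_add, dotProduct_add, hS.dotProduct_mulVec_comm y x]
  ring

theorem Matrix.IsSymm.add_mulVec_dotProduct_mulVec_add_mulVec (hS : S.IsSymm) (a : m → R)
    (C : Matrix m n R) (z : n → R) :
    (a + C *ᵥ z) ⬝ᵥ S *ᵥ (a + C *ᵥ z)
      = a ⬝ᵥ S *ᵥ a + 2 * ((Cᵀ * S) *ᵥ a ⬝ᵥ z) + z ⬝ᵥ (Cᵀ * S * C) *ᵥ z := by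
  rw [hS.add_dotProduct_mulVec_add, hS.dotProduct_mulVec_comm a (C *ᵥ z),
    mulVec_dotProduct_mulVec C S, mulVec_dotProduct_mulVec C S, mulVec_mulVec, dotProduct_comm z]

end QuadraticForms

section GaussianIntegrals

theorem integral_exp_neg_half_mul_sq_add_mul (c : ℝ) :
    ∫ x : ℝ, exp (-(1 / 2) * x ^ 2 + c * x) = √(2 * π) * exp (c ^ 2 / 2) := by
  have hsq (x : ℝ) : -(1 / 2) * x ^ 2 + c * x = -(1 / 2) * (x - c) ^ 2 + c ^ 2 / 2 := by ring
  simp_rw [hsq, exp_add, integral_mul_const,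
    integral_sub_right_eq_self (fun x ↦ exp (-(1 / 2) * x ^ 2)) c, integral_gaussian]
  norm_num [div_div_eq_mul_div, mul_comm]

variable {ι κ : Type*} [Fintype ι] [Fintype κ]

theorem integral_exp_neg_half_dotProduct_self_add (c : ι → ℝ) :
    ∫ v : ι → ℝ, exp (-(1 / 2) * (v ⬝ᵥ v) + c ⬝ᵥ v)
      = (2 * π) ^ (Fintype.card ι / 2 : ℝ) * exp ((c ⬝ᵥ c) / 2) := by
  have hsum (v : ι → ℝ) :
      -(1 / 2) * (v ⬝ᵥ v) + c ⬝ᵥ v = ∑ i, (-(1 / 2) * v i ^ 2 + c i * v i) := by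
    simp only [dotProduct, Finset.mul_sum, ← Finset.sum_add_distrib, sq]
  simp_rw [hsum, exp_sum]
  rw [integral_fintype_prod_volume_eq_prod (f := fun i x ↦ exp (-(1 / 2) * x ^ 2 + c i * x))]
  simp_rw [integral_exp_neg_half_mul_sq_add_mul, Finset.prod_mul_distrib, Finset.prod_const,
    ← exp_sum, Finset.card_univ, sqrt_eq_rpow, ← rpow_natCast,
    ← rpow_mul (by positivity : (0 : ℝ) ≤ 2 * π)]
  congr 2
  · ring
  · simp [dotProduct, Finset.sum_div, sq]

variable [DecidableEq ι]

theorem integral_comp_mulVec {E : Type*} [NormedAddCommGroup E] [NormedSpace ℝ E]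
    {A : Matrix ι ι ℝ} (hA : A.det ≠ 0) (f : (ι → ℝ) → E) :
    ∫ x, f (A *ᵥ x) = |A.det|⁻¹ • ∫ y, f y := by
  have hemb : MeasurableEmbedding (toLin' A) :=
    (toLinearEquiv' A (invertibleOfIsUnitDet A hA.isUnit)).toContinuousLinearEquiv.toHomeomorph
      |>.measurableEmbedding
  rw [← abs_inv, ← ENNReal.toReal_ofReal (abs_nonneg _), ← integral_smul_measure,
    ← Real.map_matrix_volume_pi_eq_smul_volume_pi hA, hemb.integral_map]
  rfl

open scoped MatrixOrder in
theorem integral_exp_neg_half_dotProduct_mulVec_add {S : Matrix ι ι ℝ} (hS : S.PosDef)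
    (b : ι → ℝ) :
    ∫ ξ, exp (-(1 / 2) * (ξ ⬝ᵥ S *ᵥ ξ) + b ⬝ᵥ ξ)
      = (2 * π) ^ (Fintype.card ι / 2 : ℝ) * S.det ^ (-(1 : ℝ) / 2)
        * exp ((1 / 2) * (b ⬝ᵥ S⁻¹ *ᵥ b)) := by
  set C := CFC.sqrt S
  have hC : C.IsSymm := isHermitian_iff_isSymm.1 (CFC.sqrt_nonneg S).posSemidef.isHermitian
  have hCC : C * C = S := CFC.sqrt_mul_sqrt_self S hS.posSemidef.nonneg
  have hdetC : C.det = √S.det := by simpa using hS.posSemidef.det_sqrt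
  have hdetC_pos : 0 < C.det := hdetC ▸ sqrt_pos.2 hS.det_pos
  have hCinv : C⁻¹ * C = 1 := nonsing_inv_mul C (isUnit_iff_ne_zero.2 hdetC_pos.ne')
  have hsubst (x : ι → ℝ) : -(1 / 2) * (x ⬝ᵥ S *ᵥ x) + b ⬝ᵥ x
      = -(1 / 2) * (C *ᵥ x ⬝ᵥ C *ᵥ x) + C⁻¹ *ᵥ b ⬝ᵥ C *ᵥ x := by
    rw [mulVec_dotProduct_mulVec, mulVec_dotProduct_mulVec, hC.eq, hC.inv.eq, hCC, hCinv,
      one_mulVec]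
  have hquad : C⁻¹ *ᵥ b ⬝ᵥ C⁻¹ *ᵥ b = b ⬝ᵥ S⁻¹ *ᵥ b := by
    rw [mulVec_dotProduct_mulVec, hC.inv.eq, ← Matrix.mul_inv_rev, hCC]
  simp_rw [hsubst]
  rw [integral_comp_mulVec (f := fun y ↦ exp (-(1 / 2) * (y ⬝ᵥ y) + C⁻¹ *ᵥ b ⬝ᵥ y))
    hdetC_pos.ne', integral_exp_neg_half_dotProduct_self_add, hquad, abs_of_pos hdetC_pos, hdetC,
    sqrt_eq_rpow, ← rpow_neg hS.det_pos.le, smul_eq_mul]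
  ring_nf

theorem integral_stdGaussianDensity_mul_exp_neg_half_quadratic {W : Matrix κ κ ℝ}
    (hW : W.PosSemidef) (H : Matrix κ ι ℝ) (c l : κ → ℝ) :
    ∫ ξ : ι → ℝ, ((2 * π) ^ (-(Fintype.card ι : ℝ) / 2) * exp (-(ξ ⬝ᵥ ξ) / 2)) *
        exp (-(1 / 2) * ((c + H *ᵥ ξ) ⬝ᵥ W *ᵥ (c + H *ᵥ ξ) - 2 * (l ⬝ᵥ (c + H *ᵥ ξ))))
      = (Hᵀ * W * H + 1).det ^ (-(1 : ℝ) / 2) *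
        exp (-(1 / 2) * (c ⬝ᵥ W *ᵥ c - 2 * (l ⬝ᵥ c)) +
          (1 / 2) * (Hᵀ *ᵥ (l - W *ᵥ c) ⬝ᵥ (Hᵀ * W * H + 1)⁻¹ *ᵥ (Hᵀ *ᵥ (l - W *ᵥ c)))) := by
  have hWs : W.IsSymm := isHermitian_iff_isSymm.1 hW.isHermitian
  have hM : (Hᵀ * W * H + 1).PosDef :=
    .posSemidef_add (by simpa using hW.conjTranspose_mul_mul_same H) .one
  have hexp (ξ : ι → ℝ) : -(ξ ⬝ᵥ ξ) / 2 + -(1 / 2) *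
      ((c + H *ᵥ ξ) ⬝ᵥ W *ᵥ (c + H *ᵥ ξ) - 2 * (l ⬝ᵥ (c + H *ᵥ ξ)))
      = -(1 / 2) * (c ⬝ᵥ W *ᵥ c - 2 * (l ⬝ᵥ c)) +
        (-(1 / 2) * (ξ ⬝ᵥ (Hᵀ * W * H + 1) *ᵥ ξ) + Hᵀ *ᵥ (l - W *ᵥ c) ⬝ᵥ ξ) := by
    have hq : ξ ⬝ᵥ (Hᵀ * W * H + 1) *ᵥ ξ = H *ᵥ ξ ⬝ᵥ W *ᵥ (H *ᵥ ξ) + ξ ⬝ᵥ ξ := by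
      rw [add_mulVec, one_mulVec, dotProduct_add, ← mulVec_mulVec, mulVec_dotProduct_mulVec]
    have hb : Hᵀ *ᵥ (l - W *ᵥ c) ⬝ᵥ ξ = l ⬝ᵥ H *ᵥ ξ - c ⬝ᵥ W *ᵥ (H *ᵥ ξ) := by
      rw [dotProduct_comm, dotProduct_transpose_mulVec, sub_dotProduct, dotProduct_comm (W *ᵥ c),
        hWs.dotProduct_mulVec_comm]
    rw [hWs.add_dotProduct_mulVec_add, dotProduct_add, hq, hb]
    ring
  have hpt (ξ : ι → ℝ) : (2 * π) ^ (-(Fintype.card ι : ℝ) / 2) * exp (-(ξ ⬝ᵥ ξ) / 2) *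
        exp (-(1 / 2) * ((c + H *ᵥ ξ) ⬝ᵥ W *ᵥ (c + H *ᵥ ξ) - 2 * (l ⬝ᵥ (c + H *ᵥ ξ))))
      = (2 * π) ^ (-(Fintype.card ι : ℝ) / 2) * exp (-(1 / 2) * (c ⬝ᵥ W *ᵥ c - 2 * (l ⬝ᵥ c))) *
        exp (-(1 / 2) * (ξ ⬝ᵥ (Hᵀ * W * H + 1) *ᵥ ξ) + Hᵀ *ᵥ (l - W *ᵥ c) ⬝ᵥ ξ) := by
    rw [mul_assoc, ← exp_add, hexp, exp_add, mul_assoc]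
  simp_rw [hpt]
  rw [integral_const_mul, integral_exp_neg_half_dotProduct_mulVec_add hM, exp_add, neg_div,
    rpow_neg (by positivity)]
  field_simp

end GaussianIntegrals

theorem rbps_backward_exponent_eq {ι κ ν ρ R : Type*} [Fintype ι] [Fintype κ] [Fintype ν]
    [Fintype ρ] [DecidableEq ι] [CommRing R] {Qi : Matrix κ κ R} {W : Matrix ι ι R}
    {Ψ : Matrix ν ν R} (hQi : Qi.IsSymm) (hW : W.IsSymm) (hΨ : Ψ.IsSymm) (A : Matrix ι ρ R)
    (B : Matrix κ ρ R) (F : Matrix ι ν R) (w : κ → R) (f l : ι → R) (z : ρ → R) :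
    (w - B *ᵥ z) ⬝ᵥ Qi *ᵥ (w - B *ᵥ z)
        + ((f + A *ᵥ z) ⬝ᵥ W *ᵥ (f + A *ᵥ z) - 2 * (l ⬝ᵥ (f + A *ᵥ z)))
        - Fᵀ *ᵥ (l - W *ᵥ (f + A *ᵥ z)) ⬝ᵥ Ψ *ᵥ (Fᵀ *ᵥ (l - W *ᵥ (f + A *ᵥ z)))
      = (w ⬝ᵥ Qi *ᵥ w + f ⬝ᵥ W *ᵥ f - 2 * (l ⬝ᵥ f)
          - Fᵀ *ᵥ (l - W *ᵥ f) ⬝ᵥ Ψ *ᵥ (Fᵀ *ᵥ (l - W *ᵥ f)))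
        + (z ⬝ᵥ (Aᵀ * (1 - W * F * Ψ * Fᵀ) * W * A + Bᵀ * Qi * B) *ᵥ z
          - 2 * ((Aᵀ *ᵥ ((1 - W * F * Ψ * Fᵀ) *ᵥ (l - W *ᵥ f)) + Bᵀ *ᵥ (Qi *ᵥ w)) ⬝ᵥ z)) := by
  have hw : w - B *ᵥ z = w + (-B) *ᵥ z := by rw [neg_mulVec, sub_eq_add_neg]
  have he : Fᵀ *ᵥ (l - W *ᵥ (f + A *ᵥ z)) = Fᵀ *ᵥ (l - W *ᵥ f) + (-(Fᵀ * W * A)) *ᵥ z := by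
    simp only [mulVec_add, mulVec_sub, neg_mulVec, ← mulVec_mulVec]
    abel
  have hl : l ⬝ᵥ (f + A *ᵥ z) = l ⬝ᵥ f + Aᵀ *ᵥ l ⬝ᵥ z := by
    rw [dotProduct_add, dotProduct_comm (Aᵀ *ᵥ l), dotProduct_transpose_mulVec]
  rw [hw, he, hl, hQi.add_mulVec_dotProduct_mulVec_add_mulVec,
    hW.add_mulVec_dotProduct_mulVec_add_mulVec, hΨ.add_mulVec_dotProduct_mulVec_add_mulVec]
  simp only [transpose_neg, transpose_mul, transpose_transpose, hW.eq, Matrix.neg_mul,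
    Matrix.mul_neg, neg_neg, Matrix.mul_sub, Matrix.sub_mul, Matrix.mul_one, Matrix.one_mul,
    add_mulVec, sub_mulVec, mulVec_sub, neg_mulVec, dotProduct_add, dotProduct_sub,
    add_dotProduct, sub_dotProduct, neg_dotProduct, mulVec_mulVec, Matrix.mul_assoc, one_mulVec]
  ring

theorem rbps_mixed_backward_prediction
    (m n p : ℕ) (G : Matrix (Fin m) (Fin n) ℝ)
    (Ωhat : Matrix (Fin p) (Fin p) ℝ) (hΩ : Ωhat.PosSemidef)
    (lamHat f : Fin p → ℝ) (g uplus : Fin m → ℝ)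
    (A : Matrix (Fin p) (Fin p) ℝ) (B : Matrix (Fin m) (Fin p) ℝ)
    (F : Matrix (Fin p) (Fin n) ℝ) :
    let Q : Matrix (Fin m) (Fin m) ℝ := G * Gᵀ
    let L : Matrix (Fin n) (Fin n) ℝ := 1 - Gᵀ * Q⁻¹ * G
    let fbar : Fin p → ℝ := f + (F * Gᵀ * Q⁻¹).mulVec (uplus - g)
    let Abar : Matrix (Fin p) (Fin p) ℝ := A - F * Gᵀ * Q⁻¹ * B
    let M : Matrix (Fin n) (Fin n) ℝ := L * Fᵀ * Ωhat * F * L + 1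
    let Ψ : Matrix (Fin n) (Fin n) ℝ := L * M⁻¹ * L
    let ε : Fin p → ℝ := lamHat - Ωhat.mulVec fbar
    let τ : ℝ := (uplus - g) ⬝ᵥ Q⁻¹.mulVec (uplus - g)
        + fbar ⬝ᵥ Ωhat.mulVec fbar - 2 * (lamHat ⬝ᵥ fbar)
        - (Fᵀ.mulVec ε) ⬝ᵥ (Ψ.mulVec (Fᵀ.mulVec ε))
    let Z : ℝ := Q.det ^ (-(1 : ℝ) / 2) * M.det ^ (-(1 : ℝ) / 2) * Real.exp (-τ / 2)
    let Ω : Matrix (Fin p) (Fin p) ℝ :=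
      Abarᵀ * (1 - Ωhat * F * Ψ * Fᵀ) * Ωhat * Abar + Bᵀ * Q⁻¹ * B
    let lam : Fin p → ℝ :=
      Abarᵀ.mulVec ((1 - Ωhat * F * Ψ * Fᵀ).mulVec ε)
        + Bᵀ.mulVec (Q⁻¹.mulVec (uplus - g))
    ∀ z : Fin p → ℝ,
      Q.det ^ (-(1 : ℝ) / 2) *
        Real.exp (-(1 / 2) *
          ((uplus - g - B.mulVec z) ⬝ᵥ Q⁻¹.mulVec (uplus - g - B.mulVec z))) *
        (∫ ξ : Fin n → ℝ,
          ((2 * Real.pi) ^ (-(n : ℝ) / 2) * Real.exp (-(ξ ⬝ᵥ ξ) / 2)) *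
            Real.exp (-(1 / 2) *
              ((fbar + Abar.mulVec z + (F * L).mulVec ξ) ⬝ᵥ
                  Ωhat.mulVec (fbar + Abar.mulVec z + (F * L).mulVec ξ)
                - 2 * (lamHat ⬝ᵥ (fbar + Abar.mulVec z + (F * L).mulVec ξ)))))
      = Z * Real.exp (-(1 / 2) * (z ⬝ᵥ Ω.mulVec z - 2 * (lam ⬝ᵥ z))) := by
  intro Q L fbar Abar M Ψ ε τ Z Ω lam z
  have hQinv : Q⁻¹.IsSymm := IsSymm.inv <| by
    simp only [Q, IsSymm, transpose_mul, transpose_transpose]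
  have hΩhat : Ωhat.IsSymm := isHermitian_iff_isSymm.1 hΩ.isHermitian
  have hL : L.IsSymm := by
    simp only [L, IsSymm, transpose_sub, transpose_one, transpose_mul, transpose_transpose,
      hQinv.eq, Matrix.mul_assoc]
  have hM : (F * L)ᵀ * Ωhat * (F * L) + 1 = M := by
    simp only [M, transpose_mul, hL.eq, Matrix.mul_assoc]
  have hMsymm : M.IsSymm := hM ▸ IsSymm.add (by
    simp only [IsSymm, transpose_mul, transpose_transpose, hΩhat.eq, Matrix.mul_assoc]) isSymm_one
  have hΨ : Ψ.IsSymm := by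
    simp only [Ψ, IsSymm, transpose_mul, hL.eq, hMsymm.inv.eq, Matrix.mul_assoc]
  have hquad (v : Fin p → ℝ) :
      (F * L)ᵀ *ᵥ v ⬝ᵥ M⁻¹ *ᵥ ((F * L)ᵀ *ᵥ v) = Fᵀ *ᵥ v ⬝ᵥ Ψ *ᵥ (Fᵀ *ᵥ v) := by
    rw [transpose_mul, hL.eq, ← mulVec_mulVec, mulVec_dotProduct_mulVec, mulVec_mulVec,
      hL.eq]
  have hint :=
    integral_stdGaussianDensity_mul_exp_neg_half_quadratic hΩ (F * L) (fbar + Abar *ᵥ z) lamHat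
  rw [Fintype.card_fin, hM, hquad] at hint
  rw [hint]
  have hexp := rbps_backward_exponent_eq hQinv hΩhat hΨ Abar B F (uplus - g) fbar lamHat z
  rw [mul_assoc, mul_left_comm (rexp _), ← exp_add]
  simp only [Z, mul_assoc, ← exp_add]
  congr 3
  linear_combination (-1 / 2 : ℝ) * hexp
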